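/- Let q, d ≥ 2 be integers. For every natural number A and every s = (θ_u, θ_w, θ_2, θ_1, θ_0) ∈ ℤ^5, γ(qA, q, d; s) = Σ_{λ=0}^{q−1} γ(A, q, d; q·θ_u, (λ+1−q)·θ_u + θ_w, q·θ_u + q²·θ_2, (λ+1−q)·θ_u + θ_w + (λq − q(q−1)/2)·θ_2 + q·θ_1, (λ(λ+1)/2)·θ_2 + λ·θ_1 + θ_0). -/

import Mathlib

/-! Since `v_q` vanishes off the multiples of `q` and `v_q (q j) = v_q j + 1`, one has
`w_q n = ⌊n / q⌋ + w_q ⌊n / q⌋`, so `w_q (q m + λ) = m + w_q m` for `λ < q`; summing once more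
expresses `u_q (q m + λ)` through `u_q m`, `w_q m` and `m (m + 1) / 2`. Hence the quantity
tested at `q m + λ` is the one with the transformed coefficients tested at `m`, and splitting
`n < q A` by the residue `λ` of `n` modulo `q` gives the identity. -/

/-- `vq q n` is the `q`-adic valuation: `0` if `n = 0`, and otherwise the
largest `k` such that `q ^ k` divides `n`. -/
noncomputable def vq (q n : ℕ) : ℕ := if n = 0 then 0 else sSup {k : ℕ | q ^ k ∣ n}

/-- `wq q n = ∑_{i=0}^n vq q i`. -/
noncomputable def wq (q n : ℕ) : ℕ := ∑ i ∈ Finset.range (n + 1), vq q i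

/-- `uq q n = ∑_{i=0}^n wq q i`. -/
noncomputable def uq (q n : ℕ) : ℕ := ∑ i ∈ Finset.range (n + 1), wq q i

/-- `gamma q d tu tw t2 t1 t0 A` is the number of `n < A` with
`tu·u_q(n) + tw·w_q(n) + t2·n(n+1)/2 + t1·n + t0 ≡ 0 (mod d)`. -/
noncomputable def gamma (q d : ℕ) (tu tw t2 t1 t0 : ℤ) (A : ℕ) : ℕ :=
  ((Finset.range A).filter fun n =>
    (tu * uq q n + tw * wq q n + t2 * (n * (n + 1) / 2 : ℕ) + t1 * n + t0) % (d : ℤ) = 0).card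

open Finset

-- Mathlib's `padicValNat q` is the `q`-adic valuation for every base `q`, prime or not.
lemma vq_eq_padicValNat {q : ℕ} (hq : q ≠ 1) (n : ℕ) : vq q n = padicValNat q n := by
  rcases eq_or_ne n 0 with rfl | hn
  · simp [vq]
  · simp only [vq, hn, if_false, Nat.pow_dvd_iff_le_padicValNat hq hn]
    exact csSup_Iic (a := padicValNat q n)

lemma wq_succ (q n : ℕ) : wq q (n + 1) = wq q n + vq q (n + 1) :=
  sum_range_succ _ _

lemma wq_eq_div_add_wq_div {q : ℕ} (hq : 1 < q) (n : ℕ) : wq q n = n / q + wq q (n / q) := by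
  induction n with
  | zero => simp [wq, vq]
  | succ n ih =>
    rw [wq_succ, ih, Nat.succ_div, vq_eq_padicValNat hq.ne']
    split_ifs with hdvd
    · obtain ⟨k, hk⟩ := hdvd
      have hk0 : k ≠ 0 := by rintro rfl; simp at hk
      have hdiv : n / q + 1 = k := by
        rw [← Nat.mul_div_cancel_left k (by omega : 0 < q), ← hk, Nat.succ_div_of_dvd ⟨k, hk⟩]
      rw [hk, padicValNat_base_mul hq hk0, wq_succ, hdiv, vq_eq_padicValNat hq.ne']
      omega
    · simp [padicValNat.eq_zero_of_not_dvd hdvd]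

lemma wq_mul_add {q : ℕ} (hq : 1 < q) (m : ℕ) {r : ℕ} (hr : r < q) :
    wq q (q * m + r) = m + wq q m := by
  have hdiv : (q * m + r) / q = m := by
    rw [Nat.mul_add_div (by omega), Nat.div_eq_of_lt hr, add_zero]
  rw [wq_eq_div_add_wq_div hq, hdiv]

lemma sum_range_mul_eq_sum_sum {M : Type*} [AddCommMonoid M] (f : ℕ → M) (q m : ℕ) :
    ∑ n ∈ range (q * m), f n = ∑ j ∈ range m, ∑ r ∈ range q, f (q * j + r) := by
  induction m with
  | zero => simp
  | succ m ih => rw [Nat.mul_succ, sum_range_add, ih, sum_range_succ]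

lemma uq_mul_add {q : ℕ} (hq : 1 < q) (m : ℕ) {r : ℕ} (hr : r < q) :
    (uq q (q * m + r) : ℤ) = q * uq q m + (r + 1 - q) * wq q m
      + q * ((m * (m + 1) / 2 : ℕ) : ℤ) + (r + 1 - q) * m := by
  have hsplit : uq q (q * m + r) = q * ∑ j ∈ range m, (j + wq q j) + (r + 1) * (m + wq q m) := by
    rw [uq, add_assoc, sum_range_add, sum_range_mul_eq_sum_sum, mul_sum]
    congr 1
    · refine sum_congr rfl fun j _ => ?_
      rw [sum_congr rfl fun i hi => wq_mul_add hq j (mem_range.1 hi), sum_const, card_range,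
        smul_eq_mul]
    · rw [sum_congr rfl fun i hi => wq_mul_add hq m (by have := mem_range.1 hi; omega),
        sum_const, card_range, smul_eq_mul]
  have hgauss : ∑ j ∈ range m, j + m = m * (m + 1) / 2 := by
    rw [← sum_range_succ, sum_range_id, Nat.add_sub_cancel, mul_comm]
  have huq : ∑ j ∈ range m, wq q j + wq q m = uq q m := (sum_range_succ _ _).symm
  rw [sum_add_distrib] at hsplit
  rw [hsplit, ← hgauss, ← huq]
  push_cast
  ring

lemma two_mul_cast_div_two {n : ℕ} (hn : Even n) : 2 * ((n / 2 : ℕ) : ℤ) = n := by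
  exact_mod_cast Nat.two_mul_div_two_of_even hn

lemma triangle_mul_add (q m r : ℕ) :
    (((q * m + r) * (q * m + r + 1) / 2 : ℕ) : ℤ) = q ^ 2 * ((m * (m + 1) / 2 : ℕ) : ℤ)
      + (r * q - (q * (q - 1) / 2 : ℕ)) * m + ((r * (r + 1) / 2 : ℕ) : ℤ) := by
  have hT (n : ℕ) : 2 * ((n * (n + 1) / 2 : ℕ) : ℤ) = n * (n + 1) := by
    rw [two_mul_cast_div_two (Nat.even_mul_succ_self n)]; push_cast; ring
  have hC : 2 * ((q * (q - 1) / 2 : ℕ) : ℤ) = q * (q - 1) := by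
    rcases q with _ | q
    · simp
    · rw [two_mul_cast_div_two (Nat.even_mul_pred_self _)]; push_cast; ring
  have hqmr := hT (q * m + r)
  simp only [Nat.cast_add, Nat.cast_mul] at hqmr
  refine mul_left_cancel₀ (two_ne_zero (α := ℤ)) ?_
  linear_combination hqmr - (q : ℤ) ^ 2 * hT m + (m : ℤ) * hC - hT r

noncomputable def gammaForm (q : ℕ) (tu tw t2 t1 t0 : ℤ) (n : ℕ) : ℤ :=
  tu * uq q n + tw * wq q n + t2 * (n * (n + 1) / 2 : ℕ) + t1 * n + t0

lemma gamma_eq_card_filter (q d : ℕ) (tu tw t2 t1 t0 : ℤ) (A : ℕ) :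
    gamma q d tu tw t2 t1 t0 A = #{n ∈ range A | gammaForm q tu tw t2 t1 t0 n % d = 0} :=
  rfl

lemma gammaForm_mul_add {q : ℕ} (hq : 1 < q) (tu tw t2 t1 t0 : ℤ) (m : ℕ) {r : ℕ} (hr : r < q) :
    gammaForm q tu tw t2 t1 t0 (q * m + r) =
      gammaForm q ((q : ℤ) * tu) (((r : ℤ) + 1 - q) * tu + tw) ((q : ℤ) * tu + (q : ℤ) ^ 2 * t2)
        (((r : ℤ) + 1 - q) * tu + tw + ((r : ℤ) * q - (q * (q - 1) / 2 : ℕ)) * t2 + (q : ℤ) * t1)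
        ((r * (r + 1) / 2 : ℕ) * t2 + (r : ℤ) * t1 + t0) m := by
  simp only [gammaForm]
  rw [uq_mul_add hq m hr, wq_mul_add hq m hr, triangle_mul_add]
  push_cast
  ring

theorem stmt_3_general (q d : ℕ) (hq : 2 ≤ q) (A : ℕ) (tu tw t2 t1 t0 : ℤ) :
    gamma q d tu tw t2 t1 t0 (q * A) =
      ∑ lam ∈ Finset.range q,
        gamma q d
          ((q : ℤ) * tu)
          (((lam : ℤ) + 1 - q) * tu + tw)
          ((q : ℤ) * tu + (q : ℤ) ^ 2 * t2)
          (((lam : ℤ) + 1 - q) * tu + tw + ((lam : ℤ) * q - (q * (q - 1) / 2 : ℕ)) * t2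
            + (q : ℤ) * t1)
          ((lam * (lam + 1) / 2 : ℕ) * t2 + (lam : ℤ) * t1 + t0)
          A := by
  simp only [gamma_eq_card_filter, card_filter]
  rw [sum_range_mul_eq_sum_sum, sum_comm]
  refine sum_congr rfl fun r hr => sum_congr rfl fun m _ => ?_
  rw [gammaForm_mul_add hq tu tw t2 t1 t0 m (mem_range.1 hr)]

theorem stmt_3 (q d : ℕ) (hq : 2 ≤ q) (hd : 2 ≤ d) (A : ℕ) (tu tw t2 t1 t0 : ℤ) :
    gamma q d tu tw t2 t1 t0 (q * A) =
      ∑ lam ∈ Finset.range q,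
        gamma q d
          ((q : ℤ) * tu)
          (((lam : ℤ) + 1 - q) * tu + tw)
          ((q : ℤ) * tu + (q : ℤ) ^ 2 * t2)
          (((lam : ℤ) + 1 - q) * tu + tw + ((lam : ℤ) * q - (q * (q - 1) / 2 : ℕ)) * t2
            + (q : ℤ) * t1)
          ((lam * (lam + 1) / 2 : ℕ) * t2 + (lam : ℤ) * t1 + t0)
          A :=
  stmt_3_general q d hq A tu tw t2 t1 t0
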